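/- Let n ≥ 3 and let H(X,Y) := i·tr(η(XY + YX)) on su(n). Then H is diagonal with respect to the orthonormal basis B, i.e. H(X,Y) = 0 for distinct X, Y ∈ B; moreover H(T_p,T_p) = 2 for p < n−1, H(T_{n−1},T_{n−1}) = −2(n−2), H(E^r(k,l),E^r(k,l)) = H(E^c(k,l),E^c(k,l)) = 2 for l < n, and H(E^r(k,n),E^r(k,n)) = H(E^c(k,n),E^c(k,n)) = −(n−2). -/

import Mathlib

open Matrix

/-- The square complex matrices of size `n`. -/
abbrev Mat (n : ℕ) := Matrix (Fin n) (Fin n) ℂ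

/-- `T_k = (i/√(k(k+1)))·diag(1,…,1,−k,0,…,0)`, with `k` ones (positions `0,…,k−1` in
0-based indexing, i.e. positions `1,…,k` in the 1-based indexing of the paper) followed by
`−k`. -/
noncomputable def Tmat (n k : ℕ) : Mat n :=
  (Complex.I / (Real.sqrt (k * (k + 1)) : ℂ)) •
    Matrix.diagonal (fun j : Fin n => if (j : ℕ) < k then 1 else if (j : ℕ) = k then -(k : ℂ) else 0)

/-- `E^r(k,l)`: the matrix with `(p,q)` entry `(1/√2)(δ_{kp}δ_{lq} − δ_{kq}δ_{lp})`. -/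
noncomputable def Ermat (n : ℕ) (k l : Fin n) : Mat n :=
  ((Real.sqrt 2 : ℂ))⁻¹ • (Matrix.single k l 1 - Matrix.single l k 1)

/-- `E^c(k,l)`: the matrix with `(p,q)` entry `(i/√2)(δ_{kp}δ_{lq} + δ_{kq}δ_{lp})`. -/
noncomputable def Ecmat (n : ℕ) (k l : Fin n) : Mat n :=
  (Complex.I / (Real.sqrt 2 : ℂ)) • (Matrix.single k l 1 + Matrix.single l k 1)

/-- The index set for the basis `B` of `su(n)`: `n−1` indices for the `T_k` and two copies
of the set of pairs `k < l` for the `E^r(k,l)` and `E^c(k,l)`. -/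
abbrev BIdx (n : ℕ) :=
  Fin (n - 1) ⊕ ({p : Fin n × Fin n // p.1 < p.2} ⊕ {p : Fin n × Fin n // p.1 < p.2})

/-- The family `B = {T_1,…,T_{n−1}} ∪ {E^r(k,l)} ∪ {E^c(k,l)}`. -/
noncomputable def bmat (n : ℕ) : BIdx n → Mat n
  | Sum.inl k => Tmat n (k + 1)
  | Sum.inr (Sum.inl p) => Ermat n p.1.1 p.1.2
  | Sum.inr (Sum.inr p) => Ecmat n p.1.1 p.1.2

/-- `η = i·diag(1,…,1,−(n−1))`. -/
noncomputable def eta (n : ℕ) : Mat n :=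
  Complex.I • Matrix.diagonal (fun j : Fin n => if (j : ℕ) < n - 1 then 1 else -((n : ℂ) - 1))

/-- `H(X,Y) = i·tr(η(XY + YX))`, real-valued on `su(n)`. -/
noncomputable def Hform (n : ℕ) (X Y : Mat n) : ℂ :=
  Complex.I * (eta n * (X * Y + Y * X)).trace

/-- `σ(X,Y,Z) = i(tr(XYZ) + tr(XZY))`, real-valued on `su(n)`. -/
noncomputable def sigmaC (n : ℕ) (X Y Z : Mat n) : ℂ :=
  Complex.I * ((X * Y * Z).trace + (X * Z * Y).trace)

/-! Write `η = i·diag(d)`. Then `H(X,Y) = -∑_{j,m} (d_j + d_m) X_{jm} Y_{mj}`, so a matrix unit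
`E_{kl}` pairs only with `E_{lk}`, diagonal matrices are `H`-orthogonal to off-diagonal ones, and
`H(diag v, diag w) = -2 ∑_j d_j v_j w_j`. Every claim then reduces to a short sum in which
`d_j = 1` except for the last weight `d_{n-1} = -(n-1)`. -/
noncomputable def etaDiag (n j : ℕ) : ℂ := if j < n - 1 then 1 else -((n : ℂ) - 1)

lemma etaDiag_of_lt {n j : ℕ} (h : j < n - 1) : etaDiag n j = 1 := if_pos h

lemma etaDiag_of_not_lt {n j : ℕ} (h : ¬j < n - 1) : etaDiag n j = -((n : ℂ) - 1) := if_neg h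

lemma trace_diagonal_mul_mul_add_mul_mul {n : ℕ} (d : Fin n → ℂ) (X Y : Mat n) :
    (diagonal d * (X * Y + Y * X)).trace = ∑ j, ∑ m, (d j + d m) * (X j m * Y m j) := by
  simp only [trace, diag, diagonal_mul]
  simp only [Matrix.add_apply, mul_apply, mul_add, add_mul, Finset.mul_sum, Finset.sum_add_distrib]
  congr 1
  rw [Finset.sum_comm]
  exact Finset.sum_congr rfl fun j _ => Finset.sum_congr rfl fun m _ => by ring

lemma Hform_eq_sum (n : ℕ) (X Y : Mat n) :
    Hform n X Y = -∑ j : Fin n, ∑ m : Fin n, (etaDiag n j + etaDiag n m) * (X j m * Y m j) := by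
  rw [Hform, eta, smul_mul, trace_smul, smul_eq_mul, ← mul_assoc, Complex.I_mul_I, neg_one_mul]
  exact congrArg _ (trace_diagonal_mul_mul_add_mul_mul _ X Y)

lemma Hform_comm (n : ℕ) (X Y : Mat n) : Hform n X Y = Hform n Y X := by
  rw [Hform, add_comm (X * Y), Hform]

lemma Hform_add_left (n : ℕ) (X X' Y : Mat n) :
    Hform n (X + X') Y = Hform n X Y + Hform n X' Y := by
  simp only [Hform, add_mul, mul_add, trace_add]
  ring

lemma Hform_add_right (n : ℕ) (X Y Y' : Mat n) :
    Hform n X (Y + Y') = Hform n X Y + Hform n X Y' := by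
  rw [Hform_comm, Hform_add_left, Hform_comm, Hform_comm n Y']

lemma Hform_smul_left (n : ℕ) (a : ℂ) (X Y : Mat n) :
    Hform n (a • X) Y = a * Hform n X Y := by
  simp only [Hform, Matrix.smul_mul, Matrix.mul_smul, ← smul_add, trace_smul, smul_eq_mul]
  ring

lemma Hform_smul_right (n : ℕ) (a : ℂ) (X Y : Mat n) :
    Hform n X (a • Y) = a * Hform n X Y := by
  rw [Hform_comm, Hform_smul_left, Hform_comm]

lemma Hform_single_single (n : ℕ) (k l k' l' : Fin n) (a b : ℂ) :
    Hform n (single k l a) (single k' l' b) =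
      if l = k' ∧ k = l' then -((etaDiag n k + etaDiag n l) * (a * b)) else 0 := by
  rw [Hform_eq_sum]
  simp only [single, of_apply, ite_and, mul_ite, ite_mul, mul_zero, zero_mul]
  by_cases h1 : l = k' <;> by_cases h2 : k = l' <;> simp [h1, h2]

lemma Hform_diagonal_single (n : ℕ) (v : Fin n → ℂ) {k l : Fin n} (hkl : k ≠ l) (a : ℂ) :
    Hform n (diagonal v) (single k l a) = 0 := by
  rw [Hform_eq_sum]
  simp [diagonal_apply, single, ite_and, hkl.symm]

lemma Hform_diagonal_diagonal (n : ℕ) (v w : Fin n → ℂ) :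
    Hform n (diagonal v) (diagonal w) = -2 * ∑ j : Fin n, etaDiag n j * (v j * w j) := by
  rw [Hform_eq_sum, Finset.mul_sum, ← Finset.sum_neg_distrib]
  refine Finset.sum_congr rfl fun j _ => ?_
  simp only [diagonal_apply, mul_ite, ite_mul, zero_mul, mul_zero, Finset.sum_ite_eq',
    Finset.mem_univ, if_true, neg_mul, neg_inj]
  ring

lemma Hform_single_add_single (n : ℕ) {k l k' l' : Fin n} (hkl : k < l) (hkl' : k' < l')
    (a b a' b' : ℂ) :
    Hform n (single k l a + single l k b) (single k' l' a' + single l' k' b') =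
      if k = k' ∧ l = l' then -((etaDiag n k + etaDiag n l) * (a * b' + b * a')) else 0 := by
  simp only [Hform_add_left, Hform_add_right, Hform_single_single]
  by_cases h : k = k' ∧ l = l'
  · obtain ⟨rfl, rfl⟩ := h
    simp only [hkl.ne', hkl.ne, and_self, if_true, if_false, zero_add, add_zero]
    ring
  · have h' : ¬(l = l' ∧ k = k') := fun h' => h h'.symm
    have hlk : ¬(l = k' ∧ k = l') := by rintro ⟨rfl, rfl⟩; exact lt_asymm hkl hkl'
    have hkl'' : ¬(k = l' ∧ l = k') := fun h'' => hlk h''.symm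
    simp [h, h', hlk, hkl'']

lemma ofReal_sqrt_sq {x : ℝ} (hx : 0 ≤ x) : ((√x : ℝ) : ℂ) ^ 2 = x := by
  rw [← Complex.ofReal_pow, Real.sq_sqrt hx]

lemma ofReal_sqrt_two_sq : ((√2 : ℝ) : ℂ) ^ 2 = 2 := by
  exact_mod_cast ofReal_sqrt_sq zero_le_two

lemma Ermat_eq (n : ℕ) (k l : Fin n) :
    Ermat n k l = single k l (√2 : ℂ)⁻¹ + single l k (-(√2 : ℂ)⁻¹) := by
  rw [Ermat, smul_sub, smul_single, smul_single, sub_eq_add_neg, ← single_neg]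
  simp

lemma Ecmat_eq (n : ℕ) (k l : Fin n) :
    Ecmat n k l = single k l (Complex.I / √2) + single l k (Complex.I / √2) := by
  rw [Ecmat, smul_add, smul_single, smul_single]
  simp

lemma Hform_Ermat_Ermat (n : ℕ) {k l k' l' : Fin n} (hkl : k < l) (hkl' : k' < l') :
    Hform n (Ermat n k l) (Ermat n k' l') =
      if k = k' ∧ l = l' then etaDiag n k + etaDiag n l else 0 := by
  rw [Ermat_eq, Ermat_eq, Hform_single_add_single n hkl hkl']
  split_ifs
  · field_simp
    linear_combination -(etaDiag n k + etaDiag n l) * ofReal_sqrt_two_sq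
  · rfl

lemma Hform_Ecmat_Ecmat (n : ℕ) {k l k' l' : Fin n} (hkl : k < l) (hkl' : k' < l') :
    Hform n (Ecmat n k l) (Ecmat n k' l') =
      if k = k' ∧ l = l' then etaDiag n k + etaDiag n l else 0 := by
  rw [Ecmat_eq, Ecmat_eq, Hform_single_add_single n hkl hkl']
  split_ifs
  · field_simp
    linear_combination -(etaDiag n k + etaDiag n l) * ofReal_sqrt_two_sq
      - 2 * (etaDiag n k + etaDiag n l) * Complex.I_mul_I
  · rfl

lemma Hform_Ermat_Ecmat (n : ℕ) {k l k' l' : Fin n} (hkl : k < l) (hkl' : k' < l') :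
    Hform n (Ermat n k l) (Ecmat n k' l') = 0 := by
  rw [Ermat_eq, Ecmat_eq, Hform_single_add_single n hkl hkl']
  split_ifs <;> ring

lemma sum_range_eq_nsmul_add {M : Type*} [AddCommMonoid M] {n p : ℕ} (hpn : p < n)
    {f : ℕ → M} {c a : M} (hlt : ∀ j < p, f j = c) (heq : f p = a)
    (hgt : ∀ j, p < j → f j = 0) :
    ∑ j ∈ Finset.range n, f j = p • c + a := by
  rw [← Finset.sum_range_add_sum_Ico f hpn, Finset.sum_range_succ, heq,
    Finset.sum_congr rfl fun j hj => hlt j (Finset.mem_range.mp hj), Finset.sum_const,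
    Finset.card_range, Finset.sum_eq_zero fun j hj => hgt j (Finset.mem_Ico.mp hj).1, add_zero]

noncomputable def tDiag (k j : ℕ) : ℂ := if j < k then 1 else if j = k then -(k : ℂ) else 0

lemma tDiag_of_lt {k j : ℕ} (h : j < k) : tDiag k j = 1 := if_pos h

lemma tDiag_self (k : ℕ) : tDiag k k = -(k : ℂ) := by
  rw [tDiag, if_neg (lt_irrefl k), if_pos rfl]

lemma tDiag_of_gt {k j : ℕ} (h : k < j) : tDiag k j = 0 := by
  rw [tDiag, if_neg h.not_gt, if_neg h.ne']

lemma Tmat_eq (n k : ℕ) :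
    Tmat n k = (Complex.I / (√(k * (k + 1)) : ℝ)) • diagonal (fun j : Fin n => tDiag k j) :=
  rfl

lemma Hform_Tmat_single_add_single (n p : ℕ) {k l : Fin n} (hkl : k ≠ l) (a b : ℂ) :
    Hform n (Tmat n p) (single k l a + single l k b) = 0 := by
  rw [Tmat_eq, Hform_smul_left, Hform_add_right, Hform_diagonal_single n _ hkl,
    Hform_diagonal_single n _ hkl.symm, add_zero, mul_zero]

lemma Hform_Tmat_Tmat (n p q : ℕ) :
    Hform n (Tmat n p) (Tmat n q) =
      2 / ((√(p * (p + 1)) : ℝ) * (√(q * (q + 1)) : ℝ) : ℂ) *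
        ∑ j ∈ Finset.range n, etaDiag n j * (tDiag p j * tDiag q j) := by
  rw [Tmat_eq, Tmat_eq, Hform_smul_left, Hform_smul_right, Hform_diagonal_diagonal,
    ← Fin.sum_univ_eq_sum_range (fun j => etaDiag n j * (tDiag p j * tDiag q j)), ← mul_assoc,
    div_mul_div_comm, Complex.I_mul_I]
  ring

lemma Hform_Tmat_Tmat_of_lt {n p q : ℕ} (hpq : p < q) (hq : q ≤ n - 1) :
    Hform n (Tmat n p) (Tmat n q) = 0 := by
  have hsum : ∑ j ∈ Finset.range n, etaDiag n j * (tDiag p j * tDiag q j) = 0 := by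
    rw [sum_range_eq_nsmul_add (p := p) (c := 1) (a := -(p : ℂ)) (by omega)
      (fun j hj => by rw [etaDiag_of_lt (by omega), tDiag_of_lt hj, tDiag_of_lt (by omega)]; ring)
      (by rw [etaDiag_of_lt (by omega), tDiag_self, tDiag_of_lt hpq]; ring)
      (fun j hj => by rw [tDiag_of_gt hj]; ring)]
    simp
  rw [Hform_Tmat_Tmat, hsum, mul_zero]

lemma Hform_Tmat_self {n p : ℕ} (hp : 1 ≤ p) (hpn : p ≤ n - 1) :
    Hform n (Tmat n p) (Tmat n p) = 2 * (1 + p * etaDiag n p) / (p + 1) := by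
  have hsum : ∑ j ∈ Finset.range n, etaDiag n j * (tDiag p j * tDiag p j) =
      p * (1 + p * etaDiag n p) := by
    rw [sum_range_eq_nsmul_add (p := p) (c := 1) (a := p ^ 2 * etaDiag n p) (by omega)
      (fun j hj => by rw [etaDiag_of_lt (by omega), tDiag_of_lt hj]; ring)
      (by rw [tDiag_self]; ring)
      (fun j hj => by rw [tDiag_of_gt hj]; ring)]
    simp only [nsmul_eq_mul]
    ring
  have hsqrt : ((√(p * (p + 1)) : ℝ) : ℂ) ^ 2 = p * (p + 1) := by
    exact_mod_cast ofReal_sqrt_sq (by positivity : (0 : ℝ) ≤ p * (p + 1))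
  have hp0 : (p : ℂ) ≠ 0 := Nat.cast_ne_zero.mpr (by omega)
  rw [Hform_Tmat_Tmat, hsum, ← sq, hsqrt]
  field_simp

lemma Hform_bmat_of_ne (n : ℕ) {i j : BIdx n} (hij : i ≠ j) :
    Hform n (bmat n i) (bmat n j) = 0 := by
  have hpair : ∀ {p q : {p : Fin n × Fin n // p.1 < p.2}}, p ≠ q →
      ¬(p.1.1 = q.1.1 ∧ p.1.2 = q.1.2) := fun hpq h => hpq (Subtype.ext (Prod.ext h.1 h.2))
  rcases i with p | p | p <;> rcases j with q | q | q <;> simp only [bmat]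
  · rcases lt_or_gt_of_ne (Fin.val_ne_of_ne fun h => hij (congrArg _ h)) with h | h
    · exact Hform_Tmat_Tmat_of_lt (by omega) (by omega)
    · rw [Hform_comm]
      exact Hform_Tmat_Tmat_of_lt (by omega) (by omega)
  · rw [Ermat_eq]
    exact Hform_Tmat_single_add_single n _ q.2.ne _ _
  · rw [Ecmat_eq]
    exact Hform_Tmat_single_add_single n _ q.2.ne _ _
  · rw [Hform_comm, Ermat_eq]
    exact Hform_Tmat_single_add_single n _ p.2.ne _ _
  · rw [Hform_Ermat_Ermat n p.2 q.2, if_neg (hpair fun h => hij (congrArg _ (congrArg _ h)))]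
  · exact Hform_Ermat_Ecmat n p.2 q.2
  · rw [Hform_comm, Ecmat_eq]
    exact Hform_Tmat_single_add_single n _ p.2.ne _ _
  · rw [Hform_comm]
    exact Hform_Ermat_Ecmat n q.2 p.2
  · rw [Hform_Ecmat_Ecmat n p.2 q.2, if_neg (hpair fun h => hij (congrArg _ (congrArg _ h)))]

theorem Hform_diagonal_wrt_basis (n : ℕ) (hn : 3 ≤ n) :
    (∀ X ∈ Set.range (bmat n), ∀ Y ∈ Set.range (bmat n), X ≠ Y → Hform n X Y = 0) ∧
    (∀ p : ℕ, 1 ≤ p → p < n - 1 → Hform n (Tmat n p) (Tmat n p) = 2) ∧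
    Hform n (Tmat n (n - 1)) (Tmat n (n - 1)) = -2 * ((n : ℂ) - 2) ∧
    (∀ k l : Fin n, k < l → (l : ℕ) < n - 1 →
      Hform n (Ermat n k l) (Ermat n k l) = 2 ∧ Hform n (Ecmat n k l) (Ecmat n k l) = 2) ∧
    (∀ k l : Fin n, k < l → (l : ℕ) = n - 1 →
      Hform n (Ermat n k l) (Ermat n k l) = -((n : ℂ) - 2) ∧
      Hform n (Ecmat n k l) (Ecmat n k l) = -((n : ℂ) - 2)) := by
  refine ⟨?_, fun p hp hpn => ?_, ?_, fun k l hkl hl => ?_, fun k l hkl hl => ?_⟩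
  · rintro _ ⟨i, rfl⟩ _ ⟨j, rfl⟩ hne
    exact Hform_bmat_of_ne n fun h => hne (congrArg _ h)
  · rw [Hform_Tmat_self hp hpn.le, etaDiag_of_lt hpn]
    field_simp
    ring
  · have hn1 : (n : ℂ) ≠ 0 := Nat.cast_ne_zero.mpr (by omega)
    rw [Hform_Tmat_self (by omega) le_rfl, etaDiag_of_not_lt (lt_irrefl _),
      Nat.cast_sub (by omega), Nat.cast_one, sub_add_cancel]
    field_simp
    ring
  · have hk : (k : ℕ) < n - 1 := lt_trans hkl hl
    simp [Hform_Ermat_Ermat n hkl hkl, Hform_Ecmat_Ecmat n hkl hkl, etaDiag_of_lt hk,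
      etaDiag_of_lt hl, one_add_one_eq_two]
  · have hk : (k : ℕ) < n - 1 := by omega
    have hl' : ¬(l : ℕ) < n - 1 := by omega
    simp only [Hform_Ermat_Ermat n hkl hkl, Hform_Ecmat_Ecmat n hkl hkl, and_self, if_true,
      etaDiag_of_lt hk, etaDiag_of_not_lt hl']
    ring
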